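/- Let J be an ideal on ω and (I_n)_{n∈ω} be a sequence of analytic ideals on ω. Then ∑^J_{n∈ω} I_n is Egorov if and only if J is Egorov and {n ∈ ω : I_n is not Egorov} ∈ J. -/

import Mathlib

open MeasureTheory Set

/-- An ideal on a (countable) set `X`. -/
def IsIdeal {X : Type} (I : Set (Set X)) : Prop :=
  (∀ A B : Set X, A ∈ I → B ∈ I → A ∪ B ∈ I) ∧
  (∀ A B : Set X, A ⊆ B → B ∈ I → A ∈ I) ∧
  (∀ A : Set X, A.Finite → A ∈ I) ∧
  (Set.univ : Set X) ∉ I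

/-- `I`-pointwise convergence on `[0,1]` of a family of functions. -/
def IConvPtwise {X : Type} (I : Set (Set X)) (f : X → ℝ → ℝ) (g : ℝ → ℝ) : Prop :=
  ∀ t ∈ Icc (0:ℝ) 1, ∀ ε : ℝ, 0 < ε → {a : X | ε ≤ |f a t - g t|} ∈ I

/-- `I`-uniform convergence on `M` of a family of functions. -/
def IConvUnif {X : Type} (I : Set (Set X)) (f : X → ℝ → ℝ) (g : ℝ → ℝ) (M : Set ℝ) : Prop :=
  ∀ ε : ℝ, 0 < ε → {a : X | ∃ t ∈ M, ε ≤ |f a t - g t|} ∈ I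

/-- `I` is an Egorov ideal. -/
def IsEgorov {X : Type} (I : Set (Set X)) : Prop :=
  ∀ (f : X → ℝ → ℝ) (g : ℝ → ℝ),
    (∀ a : X, AEMeasurable (f a) (volume.restrict (Icc (0:ℝ) 1))) →
    AEMeasurable g (volume.restrict (Icc (0:ℝ) 1)) →
    IConvPtwise I f g →
    ∀ η : ℝ, 0 < η →
      ∃ M : Set ℝ, M ⊆ Icc (0:ℝ) 1 ∧ NullMeasurableSet M volume ∧
        volume (Icc (0:ℝ) 1 \ M) < ENNReal.ofReal η ∧
        IConvUnif I f g M

def IsSubmeasure (φ : Set ℕ → ENNReal) : Prop :=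
  φ ∅ = 0 ∧ (∀ n : ℕ, φ {n} < ⊤) ∧
  ∀ A B : Set ℕ, φ A ≤ φ (A ∪ B) ∧ φ (A ∪ B) ≤ φ A + φ B

def IsLscSubmeasure (φ : Set ℕ → ENNReal) : Prop :=
  ∀ A : Set ℕ, φ A = ⨆ n : ℕ, φ (A ∩ Iio n)

def IsNonpathological (φ : Set ℕ → ENNReal) : Prop :=
  ∀ A : Set ℕ, φ A = ⨆ (μ : Measure ℕ) (_ : ∀ B : Set ℕ, μ B ≤ φ B), μ A

/-- `I` is a non-pathological Σ⁰₂ ideal: `I = Fin(φ)` for some non-pathological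
lsc submeasure `φ` with `φ(ω) = ∞`. -/
def IsNonpathSigma2 (I : Set (Set ℕ)) : Prop :=
  ∃ φ : Set ℕ → ENNReal, IsSubmeasure φ ∧ IsLscSubmeasure φ ∧ IsNonpathological φ ∧
    φ Set.univ = ⊤ ∧ I = {A : Set ℕ | φ A < ⊤}

def IdealCountablyGenerated {X : Type} (I : Set (Set X)) : Prop :=
  ∃ B : Set (Set X), B.Countable ∧ B ⊆ I ∧
    ∀ A ∈ I, ∃ F : Set (Set X), F ⊆ B ∧ F.Finite ∧ A ⊆ ⋃₀ F

def IdealIso {X Y : Type} (I : Set (Set X)) (J : Set (Set Y)) : Prop :=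
  ∃ f : Y → X, Function.Bijective f ∧ ∀ A : Set X, (A ∈ I ↔ f ⁻¹' A ∈ J)

def RKle {X Y : Type} (I : Set (Set X)) (J : Set (Set Y)) : Prop :=
  ∃ f : Y → X, ∀ A : Set X, (A ∈ I ↔ f ⁻¹' A ∈ J)

def RBle {X Y : Type} (I : Set (Set X)) (J : Set (Set Y)) : Prop :=
  ∃ f : Y → X, (∀ x : X, (f ⁻¹' {x}).Finite) ∧ ∀ A : Set X, (A ∈ I ↔ f ⁻¹' A ∈ J)

/-- The restriction `I↾A` of an ideal, as an ideal on the subtype `↥A`. -/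
def restrictIdeal {X : Type} (I : Set (Set X)) (A : Set X) : Set (Set ↥A) :=
  {S : Set ↥A | (Subtype.val '' S) ∈ I}

def IsTall {X : Type} (I : Set (Set X)) : Prop :=
  ∀ A : Set X, A.Infinite → ∃ B ∈ I, B.Infinite ∧ B ⊆ A

/-- The `J`-sum `∑^J_{n∈ω} I_n` on `ω²`: sets whose `I_n`-positive sections form a `J`-set. -/
def idealSumOver (J : Set (Set ℕ)) (I : ℕ → Set (Set ℕ)) : Set (Set (ℕ × ℕ)) :=
  {M : Set (ℕ × ℕ) | {n : ℕ | {k : ℕ | (n, k) ∈ M} ∉ I n} ∈ J}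

/-- The identification of `P(X)` with the Cantor space `2^X`. -/
def idealChar {X : Type} (I : Set (Set X)) : Set (X → Bool) :=
  {x : X → Bool | {a : X | x a = true} ∈ I}

/-- An ideal on `ω` is analytic if it is an analytic subset of the Cantor space `2^ω`. -/
def IsAnalyticIdeal (I : Set (Set ℕ)) : Prop := MeasureTheory.AnalyticSet (idealChar I)


/-!
Egorov's property is equivalent to its special case for indicator families `1_{S a} → 0`
(`SetEgorovAt`). This special case is self-similar: transporting the exceptional set onto `[0,1]`
by a measure-preserving quantile map multiplies admissible levels, so an ideal failing it at some
level fails it at level `1/2`. With a uniform level, the witnesses of the non-Egorov rows `I n`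
assemble into one witness for the sum, which forces `{n | I n not Egorov} ∈ J`; and `J` embeds
into the sum by constant rows. Conversely, for an indicator family on `ω²` the sets where a row is
not `I n`-small are measurable, because analytic sets are universally measurable, and pointwise
`J`-small; the Egorov property of `J` handles them, that of the good rows `I n` the rest, with
summable losses of measure.
-/

open scoped ENNReal NNReal

namespace MeasureTheory

section AnalyticSet

lemma exists_pi_Iio_subset_of_pi_subset {k : ℕ → ℕ} {V : Set (ℕ → ℕ)} (hV : IsOpen V)
    (hkV : univ.pi (fun i => Iic (k i)) ⊆ V) : ∃ n, (Iio n).pi (fun i => Iic (k i)) ⊆ V := by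
  by_contra! h
  choose x hx hxV using fun n => not_subset.1 (h n)
  -- All the `x n` lie in one compact box `Q`, so Cantor's intersection theorem applies.
  set Q : Set (ℕ → ℕ) := univ.pi fun j => Iic (k j + ∑ i ∈ Finset.range (j + 1), x i j)
  have hxQ : ∀ n, x n ∈ Q := by
    intro n j _
    rcases lt_or_ge j n with hj | hj
    · exact (hx n j hj).trans (Nat.le_add_right _ _)
    · exact (Finset.single_le_sum (f := fun i => x i j) (fun _ _ => Nat.zero_le _)
        (Finset.mem_range.2 (Nat.lt_succ_of_le hj))).trans (Nat.le_add_left _ _)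
  set F : ℕ → Set (ℕ → ℕ) := fun n => ((Iio n).pi (fun i => Iic (k i)) \ V) ∩ Q
  have hFclosed : ∀ n, IsClosed (F n) := fun n =>
    ((isClosed_set_pi fun _ _ => isClosed_discrete _).sdiff hV).inter
      (isClosed_set_pi fun _ _ => isClosed_discrete _)
  obtain ⟨y, hy⟩ := IsCompact.nonempty_iInter_of_sequence_nonempty_isCompact_isClosed F
    (fun n y hy => ⟨⟨fun i hi => hy.1.1 i (lt_trans hi (Nat.lt_succ_self n)), hy.1.2⟩, hy.2⟩)
    (fun n => ⟨x n, ⟨hx n, hxV n⟩, hxQ n⟩)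
    ((isCompact_univ_pi fun j => (finite_Iic _).isCompact).of_isClosed_subset (hFclosed 0)
      inter_subset_right)
    hFclosed
  have hyF : ∀ n, y ∈ F n := mem_iInter.1 hy
  exact (hyF 0).1.2 (hkV fun i _ => (hyF (i + 1)).1.1 i (Nat.lt_succ_self i))

lemma exists_measure_image_lt_inter_add {α : Type*} [MeasurableSpace α] (μ : Measure α)
    (f : (ℕ → ℕ) → α) (P : Set (ℕ → ℕ)) (n : ℕ) {δ : ℝ≥0∞} (hδ : δ ≠ 0) (hP : μ (f '' P) ≠ ∞) :
    ∃ m, μ (f '' P) < μ (f '' (P ∩ {x | x n ≤ m})) + δ := by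
  have hmono : Monotone fun m : ℕ => f '' (P ∩ {x | x n ≤ m}) := fun m m' h =>
    image_mono (inter_subset_inter_right _ fun x hx => le_trans hx h)
  have hunion : ⋃ m : ℕ, f '' (P ∩ {x | x n ≤ m}) = f '' P := by
    rw [← image_iUnion, ← inter_iUnion, iUnion_eq_univ_iff.2 fun x => ⟨x n, by simp⟩, inter_univ]
  have hlt : μ (f '' P) < ⨆ m : ℕ, (μ (f '' (P ∩ {x | x n ≤ m})) + δ) := by
    rw [← ENNReal.iSup_add, ← hmono.measure_iUnion, hunion]
    exact ENNReal.lt_add_right hP hδ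
  exact lt_iSup_iff.1 hlt

variable {α : Type*} [TopologicalSpace α] [MeasurableSpace α]

theorem AnalyticSet.exists_isCompact_subset_le_add [TopologicalSpace.PseudoMetrizableSpace α]
    [BorelSpace α] (μ : Measure α) [IsFiniteMeasure μ] {A : Set α}
    (hA : AnalyticSet A) {ε : ℝ≥0∞} (hε : ε ≠ 0) : ∃ K ⊆ A, IsCompact K ∧ μ A ≤ μ K + ε := by
  rw [AnalyticSet] at hA
  rcases hA with rfl | ⟨f, hf, rfl⟩
  · exact ⟨∅, subset_rfl, isCompact_empty, by simp⟩
  obtain ⟨δ, hδ, hδε⟩ := ENNReal.exists_pos_sum_of_countable' hε ℕ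
  choose m hm using fun (P : Set (ℕ → ℕ)) n =>
    exists_measure_image_lt_inter_add μ f P n (hδ n).ne' (measure_ne_top μ _)
  -- `P n` bounds the first `n` coordinates by `k`, losing at most `δ i` of measure at step `i`.
  let P : ℕ → Set (ℕ → ℕ) := fun n => Nat.rec univ (fun n Pn => Pn ∩ {x | x n ≤ m Pn n}) n
  let k : ℕ → ℕ := fun n => m (P n) n
  have hPk : ∀ n, P n ⊆ (Iio n).pi (fun i => Iic (k i)) := by
    intro n
    induction n with
    | zero => simp
    | succ n ih =>
      rintro x ⟨hxP, hxn⟩ i hi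
      rcases (Nat.lt_succ_iff_lt_or_eq.1 hi) with hi | rfl
      · exact ih hxP i hi
      · exact hxn
  have hμP : ∀ n, μ (range f) ≤ μ (f '' P n) + ∑ i ∈ Finset.range n, δ i := by
    intro n
    induction n with
    | zero => simp [P]
    | succ n ih =>
      calc μ (range f) ≤ μ (f '' P n) + ∑ i ∈ Finset.range n, δ i := ih
        _ ≤ μ (f '' P (n + 1)) + δ n + ∑ i ∈ Finset.range n, δ i := by
          gcongr; exact (hm (P n) n).le
        _ = μ (f '' P (n + 1)) + ∑ i ∈ Finset.range (n + 1), δ i := by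
          rw [Finset.sum_range_succ]; ring
  set K := f '' univ.pi (fun i => Iic (k i))
  refine ⟨K, image_subset_range _ _,
    (isCompact_univ_pi fun i => (finite_Iic _).isCompact).image hf, ?_⟩
  refine tsub_le_iff_right.1 ?_
  rw [K.measure_eq_iInf_isOpen]
  refine le_iInf₂ fun U hKU => le_iInf fun hU => ?_
  rw [tsub_le_iff_right]
  obtain ⟨n, hn⟩ := exists_pi_Iio_subset_of_pi_subset (hU.preimage hf) (image_subset_iff.1 hKU)
  calc μ (range f) ≤ μ (f '' P n) + ∑ i ∈ Finset.range n, δ i := hμP n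
    _ ≤ μ U + ε := by
      gcongr
      · exact image_subset_iff.2 ((hPk n).trans hn)
      · exact (ENNReal.sum_le_tsum _).trans hδε.le

theorem AnalyticSet.nullMeasurableSet [TopologicalSpace.MetrizableSpace α] [BorelSpace α]
    {A : Set α} (hA : AnalyticSet A) (μ : Measure α) [IsFiniteMeasure μ] :
    NullMeasurableSet A μ := by
  choose K hKA hK hμK using fun n : ℕ =>
    hA.exists_isCompact_subset_le_add μ (ENNReal.inv_ne_zero.2 (ENNReal.natCast_ne_top n))
  have hB : MeasurableSet (⋃ n, K n) := .iUnion fun n => (hK n).isClosed.measurableSet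
  have hdiff : μ (A \ ⋃ n, K n) = 0 := by
    have hle : μ A ≤ μ (⋃ n, K n) := by
      refine ENNReal.le_of_forall_pos_le_add fun ε hε _ => ?_
      obtain ⟨n, hn⟩ := ENNReal.exists_inv_nat_lt (ENNReal.coe_ne_zero.2 hε.ne')
      exact (hμK n).trans (add_le_add (measure_mono (subset_iUnion K n)) hn.le)
    have hsplit := measure_inter_add_sdiff (μ := μ) A hB
    rw [inter_eq_right.2 (iUnion_subset hKA)] at hsplit
    exact nonpos_iff_eq_zero.1 (ENNReal.le_of_add_le_add_left (measure_ne_top μ _)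
      (by rw [add_zero, hsplit]; exact hle))
  rw [← union_sdiff_cancel (iUnion_subset hKA)]
  exact hB.nullMeasurableSet.union (.of_null hdiff)

end AnalyticSet

open ProbabilityTheory

lemma continuous_cdf (ρ : Measure ℝ) [IsProbabilityMeasure ρ] [NullSingletonClass ρ] :
    Continuous (cdf ρ) := by
  refine continuous_iff_continuousAt.2 fun x => ?_
  rw [(cdf ρ).mono.continuousAt_iff_leftLim_eq_rightLim, StieltjesFunction.rightLim_eq]
  have h := (cdf ρ).measure_singleton x
  rw [measure_cdf, measure_singleton, eq_comm, ENNReal.ofReal_eq_zero, sub_nonpos] at h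
  exact le_antisymm ((cdf ρ).mono.leftLim_le le_rfl) h

/-- A right inverse of `cdf ρ` on `[0,1]`; the `min s 1` keeps it monotone on all of `ℝ`. -/
noncomputable def quantileIcc (ρ : Measure ℝ) (s : ℝ) : ℝ :=
  sInf {t ∈ Icc (0:ℝ) 1 | min s 1 ≤ cdf ρ t}

section quantileIcc

variable {ρ : Measure ℝ}

lemma bddBelow_quantileIcc_set (s : ℝ) : BddBelow {t ∈ Icc (0:ℝ) 1 | min s 1 ≤ cdf ρ t} :=
  ⟨0, fun _ ht => ht.1.1⟩

lemma one_mem_quantileIcc_set (h1 : cdf ρ 1 = 1) (s : ℝ) :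
    (1:ℝ) ∈ {t ∈ Icc (0:ℝ) 1 | min s 1 ≤ cdf ρ t} :=
  ⟨right_mem_Icc.2 zero_le_one, by rw [h1]; exact min_le_right s 1⟩

lemma quantileIcc_mem_Icc (h1 : cdf ρ 1 = 1) (s : ℝ) : quantileIcc ρ s ∈ Icc (0:ℝ) 1 :=
  ⟨le_csInf ⟨1, one_mem_quantileIcc_set h1 s⟩ fun _ ht => ht.1.1,
    csInf_le (bddBelow_quantileIcc_set s) (one_mem_quantileIcc_set h1 s)⟩

lemma monotone_quantileIcc (h1 : cdf ρ 1 = 1) : Monotone (quantileIcc ρ) := fun s s' hss' =>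
  csInf_le_csInf (bddBelow_quantileIcc_set s) ⟨1, one_mem_quantileIcc_set h1 s'⟩
    fun _ ht => ⟨ht.1, (min_le_min_right 1 hss').trans ht.2⟩

lemma le_cdf_quantileIcc (hc : Continuous (cdf ρ)) (h1 : cdf ρ 1 = 1) {s : ℝ} (hs : s ≤ 1) :
    s ≤ cdf ρ (quantileIcc ρ s) := by
  have hclosed : IsClosed {t ∈ Icc (0:ℝ) 1 | min s 1 ≤ cdf ρ t} :=
    isClosed_Icc.inter (isClosed_le continuous_const hc)
  simpa [quantileIcc, min_eq_left hs] using
    (hclosed.csInf_mem ⟨1, one_mem_quantileIcc_set h1 s⟩ (bddBelow_quantileIcc_set s)).2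

lemma quantileIcc_le_iff (hc : Continuous (cdf ρ)) (h1 : cdf ρ 1 = 1) {s t : ℝ} (hs : s ≤ 1)
    (ht : 0 ≤ t) : quantileIcc ρ s ≤ t ↔ s ≤ cdf ρ t := by
  refine ⟨fun h => (le_cdf_quantileIcc hc h1 hs).trans ((cdf ρ).mono h), fun h => ?_⟩
  rcases le_or_gt t 1 with ht1 | ht1
  · exact csInf_le (bddBelow_quantileIcc_set s) ⟨⟨ht, ht1⟩, (min_le_left s 1).trans h⟩
  · exact (quantileIcc_mem_Icc h1 s).2.trans ht1.le

lemma cdf_quantileIcc (hc : Continuous (cdf ρ)) (h0 : cdf ρ 0 = 0) (h1 : cdf ρ 1 = 1) {s : ℝ}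
    (hs : s ∈ Icc (0:ℝ) 1) : cdf ρ (quantileIcc ρ s) = s := by
  have hθ := quantileIcc_mem_Icc h1 s
  obtain ⟨t, ht, hts⟩ := intermediate_value_Icc hθ.1 hc.continuousOn
    (show s ∈ Icc (cdf ρ 0) (cdf ρ (quantileIcc ρ s)) from
      ⟨by rw [h0]; exact hs.1, le_cdf_quantileIcc hc h1 hs.2⟩)
  have hθt : quantileIcc ρ s ≤ t := (quantileIcc_le_iff hc h1 hs.2 ht.1).2 hts.ge
  rwa [le_antisymm ht.2 hθt] at hts

lemma map_quantileIcc [IsProbabilityMeasure ρ] (hc : Continuous (cdf ρ)) (h0 : cdf ρ 0 = 0)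
    (h1 : cdf ρ 1 = 1) : (volume.restrict (Icc (0:ℝ) 1)).map (quantileIcc ρ) = ρ := by
  have hθ : Measurable (quantileIcc ρ) := (monotone_quantileIcc h1).measurable
  refine Measure.ext_of_Iic _ _ fun t => ?_
  rw [Measure.map_apply hθ measurableSet_Iic, Measure.restrict_apply (hθ measurableSet_Iic),
    ← ofReal_cdf]
  rcases lt_or_ge t 0 with ht | ht
  · have hempty : quantileIcc ρ ⁻¹' Iic t ∩ Icc 0 1 = ∅ := eq_empty_of_forall_notMem
      fun s hs => not_le.2 ht ((quantileIcc_mem_Icc h1 s).1.trans hs.1)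
    have hF : cdf ρ t = 0 := le_antisymm (h0 ▸ (cdf ρ).mono ht.le) (cdf_nonneg ρ t)
    simp [hempty, hF]
  · have hpre : quantileIcc ρ ⁻¹' Iic t ∩ Icc 0 1 = Icc 0 (cdf ρ t) := by
      ext s
      simp only [mem_inter_iff, mem_preimage, mem_Iic, mem_Icc]
      constructor
      · rintro ⟨h, hs0, hs1⟩
        exact ⟨hs0, (quantileIcc_le_iff hc h1 hs1 ht).1 h⟩
      · rintro ⟨hs0, hs⟩
        have hs1 := hs.trans (cdf_le_one ρ t)
        exact ⟨(quantileIcc_le_iff hc h1 hs1 ht).2 hs, hs0, hs1⟩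
    rw [hpre, Real.volume_Icc, sub_zero]

end quantileIcc

theorem exists_injOn_map_volume_Icc_eq (ρ : Measure ℝ) [IsProbabilityMeasure ρ]
    [NullSingletonClass ρ] (hρ : ρ (Icc 0 1)ᶜ = 0) :
    ∃ θ : ℝ → ℝ, Measurable θ ∧ MapsTo θ (Icc 0 1) (Icc 0 1) ∧ InjOn θ (Icc 0 1) ∧
      (volume.restrict (Icc (0:ℝ) 1)).map θ = ρ := by
  have hc := continuous_cdf ρ
  have h0 : cdf ρ 0 = 0 := by
    refine le_antisymm ?_ (cdf_nonneg ρ 0)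
    rw [← ENNReal.ofReal_eq_zero, ofReal_cdf]
    refine measure_mono_null (fun t ht => ?_) (measure_union_null hρ (measure_singleton 0))
    rcases (mem_Iic.1 ht).lt_or_eq with h | h
    · exact Or.inl fun h' => (not_le.2 h) h'.1
    · exact Or.inr h
  have h1 : cdf ρ 1 = 1 := by
    have hIcc : ρ (Icc 0 1) = 1 := (prob_compl_eq_zero_iff measurableSet_Icc).1 hρ
    have hIic : ρ (Iic 1) = 1 := le_antisymm prob_le_one (hIcc ▸ measure_mono Icc_subset_Iic_self)
    rwa [← ofReal_cdf, ENNReal.ofReal_eq_one] at hIic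
  refine ⟨quantileIcc ρ, (monotone_quantileIcc h1).measurable,
    fun s _ => quantileIcc_mem_Icc h1 s, fun s hs s' hs' h => ?_, map_quantileIcc hc h0 h1⟩
  rw [← cdf_quantileIcc hc h0 h1 hs, h, cdf_quantileIcc hc h0 h1 hs']

theorem exists_injOn_map_volume_Icc_eq_smul_restrict {C : Set ℝ} (hCI : C ⊆ Icc 0 1)
    (hC0 : volume C ≠ 0) :
    ∃ θ : ℝ → ℝ, Measurable θ ∧ MapsTo θ (Icc 0 1) (Icc 0 1) ∧ InjOn θ (Icc 0 1) ∧
      (volume.restrict (Icc (0:ℝ) 1)).map θ = (volume C)⁻¹ • volume.restrict C := by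
  have hCtop : volume C ≠ ∞ := ((measure_mono hCI).trans_lt (by simp)).ne
  have : IsProbabilityMeasure ((volume C)⁻¹ • volume.restrict C) :=
    ⟨by simp [ENNReal.inv_mul_cancel hC0 hCtop]⟩
  have : NullSingletonClass ((volume C)⁻¹ • volume.restrict C) := ⟨fun x => by simp⟩
  refine exists_injOn_map_volume_Icc_eq _ ?_
  rw [Measure.smul_apply, Measure.restrict_apply measurableSet_Icc.compl,
    (disjoint_compl_left_iff_subset.2 hCI).inter_eq]
  simp

lemma measure_sdiff_image_eq {C : Set ℝ} (hC : MeasurableSet C) (hCI : C ⊆ Icc 0 1)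
    {θ : ℝ → ℝ} (hθ : Measurable θ) (hθinj : InjOn θ (Icc 0 1))
    (hθC : (volume.restrict (Icc (0:ℝ) 1)).map θ = (volume C)⁻¹ • volume.restrict C)
    {M : Set ℝ} (hMI : M ⊆ Icc 0 1) (hM : MeasurableSet (θ '' M)) :
    volume (C \ θ '' M) = volume C * volume (Icc 0 1 \ M) := by
  have hCtop : volume C ≠ ∞ := ((measure_mono hCI).trans_lt (by simp)).ne
  have hCae : ∀ᵐ s ∂(volume.restrict (Icc (0:ℝ) 1)), θ s ∈ C := by
    have : volume.restrict (Icc (0:ℝ) 1) (θ ⁻¹' Cᶜ) = 0 := by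
      rw [← Measure.map_apply hθ hC.compl, hθC]
      simp [Measure.restrict_apply hC.compl]
    exact (measure_eq_zero_iff_ae_notMem.1 this).mono fun s hs => by simpa using hs
  rcases eq_or_ne (volume C) 0 with hC0 | hC0
  · rw [hC0, zero_mul]
    exact measure_mono_null sdiff_subset hC0
  have hpre : θ ⁻¹' (θ '' M) ∩ Icc 0 1 = M := hθinj.preimage_image_inter hMI
  have key : (volume C)⁻¹ * volume (C \ θ '' M) = volume (Icc 0 1 \ M) :=
    calc (volume C)⁻¹ * volume (C \ θ '' M)
        = ((volume C)⁻¹ • volume.restrict C) (C \ θ '' M) := by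
          rw [Measure.smul_apply, Measure.restrict_apply (hC.diff hM),
            inter_eq_left.2 sdiff_subset, smul_eq_mul]
      _ = volume.restrict (Icc 0 1) (θ ⁻¹' (C \ θ '' M)) := by
          rw [← hθC, Measure.map_apply hθ (hC.diff hM)]
      _ = volume.restrict (Icc 0 1) (θ ⁻¹' (θ '' M))ᶜ :=
          measure_congr (hCae.mono fun s hs => eq_iff_iff.2 ⟨fun h => h.2, fun h => ⟨hs, h⟩⟩)
      _ = volume (Icc 0 1 \ (θ ⁻¹' (θ '' M) ∩ Icc 0 1)) := by
          rw [Measure.restrict_apply (hθ hM).compl, sdiff_inter_self_eq_sdiff, sdiff_eq_compl_inter]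
      _ = volume (Icc 0 1 \ M) := by rw [hpre]
  rw [← key, ← mul_assoc, ENNReal.mul_inv_cancel hC0 hCtop, one_mul]

lemma exists_pos_forall_measure_sdiff_iInter_lt {α ι : Type*} [MeasurableSpace α] [Countable ι]
    (μ : Measure α) (s : Set α) {ε : ℝ≥0∞} (hε : ε ≠ 0) :
    ∃ δ : ι → ℝ, (∀ i, 0 < δ i) ∧
      ∀ M : ι → Set α, (∀ i, μ (s \ M i) < ENNReal.ofReal (δ i)) → μ (s \ ⋂ i, M i) < ε := by
  obtain ⟨δ, hδ, hδε⟩ := ENNReal.exists_pos_sum_of_countable hε ι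
  refine ⟨fun i => δ i, fun i => hδ i, fun M hM => ?_⟩
  calc μ (s \ ⋂ i, M i) = μ (⋃ i, s \ M i) := by rw [sdiff_iInter]
    _ ≤ ∑' i, μ (s \ M i) := measure_iUnion_le _
    _ ≤ ∑' i, (δ i : ℝ≥0∞) := ENNReal.tsum_le_tsum fun i => by
        simpa using (hM i).le
    _ < ε := hδε

end MeasureTheory

section Ideal

variable {X : Type} {I : Set (Set X)}

lemma IsIdeal.empty_mem (hI : IsIdeal I) : ∅ ∈ I := hI.2.2.1 ∅ finite_empty

lemma IsIdeal.mem_of_subset (hI : IsIdeal I) {A B : Set X} (hAB : A ⊆ B) (hB : B ∈ I) :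
    A ∈ I :=
  hI.2.1 A B hAB hB

lemma IsIdeal.union_mem (hI : IsIdeal I) {A B : Set X} (hA : A ∈ I) (hB : B ∈ I) :
    A ∪ B ∈ I :=
  hI.1 A B hA hB

lemma IsIdeal.univ_notMem (hI : IsIdeal I) : univ ∉ I := hI.2.2.2

end Ideal

/-- The Egorov property at level `η`, tested only on indicator functions `1_{S a}` converging
to `0`: uniform convergence on `M` means that `M` meets `S a` for `I`-few `a` only. -/
def SetEgorovAt {X : Type} (I : Set (Set X)) (η : ℝ) : Prop :=
  ∀ S : X → Set ℝ, (∀ a, NullMeasurableSet (S a) (volume.restrict (Icc 0 1))) →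
    (∀ t ∈ Icc (0:ℝ) 1, {a | t ∈ S a} ∈ I) →
    ∃ M ⊆ Icc (0:ℝ) 1, MeasurableSet M ∧ volume (Icc 0 1 \ M) < ENNReal.ofReal η ∧
      {a | (S a ∩ M).Nonempty} ∈ I

section SetEgorovAt

variable {X : Type} {I : Set (Set X)}

lemma SetEgorovAt.mono {η η' : ℝ} (h : SetEgorovAt I η) (hηη' : η ≤ η') : SetEgorovAt I η' :=
  fun S hS hSI => (h S hS hSI).imp fun _ ⟨hMI, hM, hMη, hMS⟩ =>
    ⟨hMI, hM, hMη.trans_le (ENNReal.ofReal_le_ofReal hηη'), hMS⟩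

theorem IsEgorov.setEgorovAt (hI : IsIdeal I) (hE : IsEgorov I) {η : ℝ} (hη : 0 < η) :
    SetEgorovAt I η := by
  intro S hS hSI
  let f : X → ℝ → ℝ := fun a => (S a).indicator 1
  have hconv : IConvPtwise I f 0 := by
    intro t ht ε hε
    refine hI.mem_of_subset (fun a ha => ?_) (hSI t ht)
    by_contra h
    have ha : ε ≤ |(S a).indicator 1 t - 0| := ha
    rw [indicator_of_notMem (show t ∉ S a from h), sub_zero, abs_zero] at ha
    exact hε.not_ge ha
  obtain ⟨M, hMI, hM, hMη, hunif⟩ :=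
    hE f 0 (fun a => (aemeasurable_indicator_const_iff 1).2 (hS a)) aemeasurable_const hconv η hη
  obtain ⟨M', hM'M, hM', hae⟩ := hM.exists_measurable_subset_ae_eq
  refine ⟨M', hM'M.trans hMI, hM',
    (measure_congr (Filter.EventuallyEq.rfl.diff hae)).trans_lt hMη, ?_⟩
  refine hI.mem_of_subset ?_ (hunif 1 one_pos)
  rintro a ⟨t, htS, htM⟩
  exact ⟨t, hM'M htM, by simp [f, indicator_of_mem htS]⟩

theorem isEgorov_of_forall_setEgorovAt (hI : IsIdeal I) (h : ∀ η, 0 < η → SetEgorovAt I η) :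
    IsEgorov I := by
  intro f g hf hg hconv η hη
  obtain ⟨δ, hδ, hδη⟩ := exists_pos_forall_measure_sdiff_iInter_lt (ι := ℕ) volume (Icc (0:ℝ) 1)
    (ENNReal.ofReal_pos.2 hη).ne'
  let S : ℕ → X → Set ℝ := fun j a => {t | 1 / (j + 1 : ℝ) ≤ |f a t - g t|}
  choose M hMI hM hMη hMS using fun j => h (δ j) (hδ j) (S j)
    (fun a => nullMeasurableSet_le aemeasurable_const
      (continuous_abs.measurable.comp_aemeasurable ((hf a).sub hg)))
    (fun t ht => hconv t ht _ Nat.one_div_pos_of_nat)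
  refine ⟨⋂ j, M j, (iInter_subset M 0).trans (hMI 0),
    (MeasurableSet.iInter hM).nullMeasurableSet, hδη M hMη, fun ε hε => ?_⟩
  obtain ⟨j, hj⟩ := exists_nat_one_div_lt hε
  refine hI.mem_of_subset ?_ (hMS j)
  rintro a ⟨t, htM, htε⟩
  exact ⟨t, hj.le.trans htε, mem_iInter.1 htM j⟩

theorem SetEgorovAt.mul (hI : IsIdeal I) {η₁ η₂ : ℝ} (hη₁ : 0 < η₁) (hη₂ : 0 < η₂)
    (h₁ : SetEgorovAt I η₁) (h₂ : SetEgorovAt I η₂) : SetEgorovAt I (η₁ * η₂) := by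
  intro S hS hSI
  obtain ⟨M₁, hM₁I, hM₁, hM₁η, hM₁S⟩ := h₁ S hS hSI
  set C := Icc (0:ℝ) 1 \ M₁
  rcases eq_or_ne (volume C) 0 with hC0 | hC0
  · exact ⟨M₁, hM₁I, hM₁, hC0 ▸ ENNReal.ofReal_pos.2 (mul_pos hη₁ hη₂), hM₁S⟩
  have hC : MeasurableSet C := measurableSet_Icc.diff hM₁
  -- Transport the problem from the exceptional set `C` to `[0,1]`, where `h₂` shrinks it
  -- by the factor `η₂`.
  obtain ⟨θ, hθ, hθI, hθinj, hθC⟩ := exists_injOn_map_volume_Icc_eq_smul_restrict sdiff_subset hC0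
  have hθqmp : Measure.QuasiMeasurePreserving θ (volume.restrict (Icc 0 1))
      (volume.restrict (Icc 0 1)) := ⟨hθ, hθC ▸ Measure.smul_absolutelyContinuous.trans
        (Measure.absolutelyContinuous_of_le (Measure.restrict_mono sdiff_subset le_rfl))⟩
  obtain ⟨M₂, hM₂I, hM₂, hM₂η, hM₂S⟩ := h₂ (fun a => θ ⁻¹' S a)
    (fun a => (hS a).preimage hθqmp) (fun t ht => hSI (θ t) (hθI ht))
  have hW : MeasurableSet (θ '' M₂) := hM₂.image_of_measurable_injOn hθ (hθinj.mono hM₂I)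
  refine ⟨M₁ ∪ θ '' M₂, union_subset hM₁I ((image_mono hM₂I).trans hθI.image_subset),
    hM₁.union hW, ?_, ?_⟩
  · rw [← Set.sdiff_sdiff, measure_sdiff_image_eq hC sdiff_subset hθ hθinj hθC hM₂I hW,
      ENNReal.ofReal_mul hη₁.le]
    exact ENNReal.mul_lt_mul hM₁η hM₂η
  · refine hI.mem_of_subset ?_ (hI.union_mem hM₁S hM₂S)
    rintro a ⟨t, htS, htM₁ | ⟨s, hsM₂, rfl⟩⟩
    · exact Or.inl ⟨t, htS, htM₁⟩
    · exact Or.inr ⟨s, htS, hsM₂⟩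

lemma SetEgorovAt.restrict (hI : IsIdeal I) {η : ℝ} (h : SetEgorovAt I η) {S : X → Set ℝ}
    (hS : ∀ a, NullMeasurableSet (S a) (volume.restrict (Icc 0 1))) {M₀ : Set ℝ}
    (hM₀ : MeasurableSet M₀) (hSI : ∀ t ∈ M₀, {a | t ∈ S a} ∈ I) :
    ∃ M ⊆ Icc (0:ℝ) 1, MeasurableSet M ∧ volume (Icc 0 1 \ M) < ENNReal.ofReal η ∧
      {a | (S a ∩ (M₀ ∩ M)).Nonempty} ∈ I := by
  have hSI' : ∀ t ∈ Icc (0:ℝ) 1, {a | t ∈ S a ∩ M₀} ∈ I := by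
    intro t _
    by_cases htM : t ∈ M₀
    · exact hI.mem_of_subset (fun a ha => ha.1) (hSI t htM)
    · simpa [htM] using hI.empty_mem
  obtain ⟨M, hMI, hM, hMη, hMS⟩ :=
    h (fun a => S a ∩ M₀) (fun a => (hS a).inter hM₀.nullMeasurableSet) hSI'
  exact ⟨M, hMI, hM, hMη, by simpa only [inter_assoc] using hMS⟩

theorem isEgorov_of_setEgorovAt (hI : IsIdeal I) {η : ℝ} (hη₀ : 0 < η) (hη₁ : η < 1)
    (h : SetEgorovAt I η) : IsEgorov I := by
  have hpow : ∀ n, SetEgorovAt I (η ^ (n + 1)) := by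
    intro n
    induction n with
    | zero => simpa using h
    | succ n ih => simpa [pow_succ] using ih.mul hI (pow_pos hη₀ _) hη₀ h
  refine isEgorov_of_forall_setEgorovAt hI fun ε hε => ?_
  obtain ⟨n, hn⟩ := exists_pow_lt_of_lt_one hε hη₁
  exact (hpow n).mono ((pow_le_pow_of_le_one hη₀.le hη₁.le n.le_succ).trans hn.le)

end SetEgorovAt

theorem IsAnalyticIdeal.nullMeasurableSet_setOf_mem {Ω : Type*} [MeasurableSpace Ω]
    {I : Set (Set ℕ)} (hI : IsAnalyticIdeal I) (μ : Measure Ω) [IsFiniteMeasure μ]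
    {S : ℕ → Set Ω} (hS : ∀ k, NullMeasurableSet (S k) μ) :
    NullMeasurableSet {t | {k | t ∈ S k} ∈ I} μ := by
  classical
  choose D _ hD hDS using fun k => (hS k).exists_measurable_subset_ae_eq
  let Ψ : Ω → ℕ → Bool := fun t k => decide (t ∈ D k)
  have hΨ : Measurable Ψ := measurable_pi_lambda _ fun k =>
    (measurable_from_top (f := fun p : Prop => decide p)).comp (measurable_mem.2 (hD k))
  have hDI : NullMeasurableSet (Ψ ⁻¹' idealChar I) μ :=
    (AnalyticSet.nullMeasurableSet hI (μ.map Ψ)).preimage (hΨ.quasiMeasurePreserving μ)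
  refine hDI.congr ((ae_all_iff.2 hDS).mono fun t ht => ?_)
  change ({k | decide (t ∈ D k) = true} ∈ I) = ({k | t ∈ S k} ∈ I)
  simp only [decide_eq_true_eq]
  congr 1
  ext k
  exact iff_of_eq (ht k)

section idealSumOver

variable {J : Set (Set ℕ)} {I : ℕ → Set (Set ℕ)}

theorem isIdeal_idealSumOver (hJ : IsIdeal J) (hI : ∀ n, IsIdeal (I n)) :
    IsIdeal (idealSumOver J I) := by
  refine ⟨fun A B hA hB => ?_, fun A B hAB hB => ?_, fun A hA => ?_, ?_⟩
  · refine hJ.mem_of_subset (fun n hn => ?_) (hJ.union_mem hA hB)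
    by_contra h
    simp only [mem_union, mem_ofPred_eq, not_or, not_not] at h
    exact hn ((hI n).union_mem h.1 h.2)
  · exact hJ.mem_of_subset (fun n hn hB' => hn ((hI n).mem_of_subset (fun k hk => hAB hk) hB')) hB
  · have hempty : {n | {k | (n, k) ∈ A} ∉ I n} = ∅ := eq_empty_of_forall_notMem fun n hn =>
      hn ((hI n).2.2.1 _ (hA.preimage (Prod.mk_right_injective n).injOn))
    rw [idealSumOver, mem_ofPred_eq, hempty]
    exact hJ.empty_mem
  · simpa [idealSumOver, (hI _).univ_notMem] using hJ.univ_notMem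

lemma preimage_fst_mem_idealSumOver_iff (hI : ∀ n, IsIdeal (I n)) {A : Set ℕ} :
    Prod.fst ⁻¹' A ∈ idealSumOver J I ↔ A ∈ J := by
  have hsec : {n | {k | (n, k) ∈ Prod.fst ⁻¹' A} ∉ I n} = A := by
    ext n
    by_cases hn : n ∈ A
    · simpa [hn] using (hI n).univ_notMem
    · simpa [hn] using (hI n).empty_mem
  rw [idealSumOver, mem_ofPred_eq, hsec]

theorem IsEgorov.of_idealSumOver (hI : ∀ n, IsIdeal (I n))
    (h : IsEgorov (idealSumOver J I)) : IsEgorov J := by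
  intro f g hf hg hconv η hη
  obtain ⟨M, hMI, hM, hMη, hunif⟩ := h (fun p => f p.1) g (fun p => hf p.1) hg
    (fun t ht ε hε => (preimage_fst_mem_idealSumOver_iff hI).2 (hconv t ht ε hε)) η hη
  exact ⟨M, hMI, hM, hMη, fun ε hε => (preimage_fst_mem_idealSumOver_iff hI).1 (hunif ε hε)⟩

theorem SetEgorovAt.setOf_not_setEgorovAt_mem_of_idealSumOver (hJ : IsIdeal J)
    (hI : ∀ n, IsIdeal (I n)) {η : ℝ} (h : SetEgorovAt (idealSumOver J I) η) :
    {n | ¬ SetEgorovAt (I n) η} ∈ J := by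
  have hwit : ∀ n, ∃ S : ℕ → Set ℝ, (∀ k, NullMeasurableSet (S k) (volume.restrict (Icc 0 1))) ∧
      (∀ t ∈ Icc (0:ℝ) 1, {k | t ∈ S k} ∈ I n) ∧
      (¬ SetEgorovAt (I n) η → ∀ M ⊆ Icc (0:ℝ) 1, MeasurableSet M →
        volume (Icc 0 1 \ M) < ENNReal.ofReal η → {k | (S k ∩ M).Nonempty} ∉ I n) := by
    intro n
    by_cases hn : SetEgorovAt (I n) η
    · exact ⟨fun _ => ∅, fun _ => .empty, fun t _ => by simpa using (hI n).empty_mem,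
        fun h => (h hn).elim⟩
    · simp only [SetEgorovAt, not_forall, not_exists, not_and] at hn
      obtain ⟨S, hS, hSI, hno⟩ := hn
      exact ⟨S, hS, hSI, fun _ => hno⟩
  choose S hS hSI hno using hwit
  obtain ⟨M, hMI, hM, hMη, hMS⟩ := h (fun p => S p.1 p.2) (fun p => hS _ _) fun t ht => by
    simpa [idealSumOver, hSI _ t ht] using hJ.empty_mem
  exact hJ.mem_of_subset (fun n hn => hno n hn M hMI hM hMη) hMS

theorem IsEgorov.idealSumOver (hJ : IsIdeal J) (hI : ∀ n, IsIdeal (I n))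
    (hIa : ∀ n, IsAnalyticIdeal (I n)) (hJE : IsEgorov J) (hN : {n | ¬ IsEgorov (I n)} ∈ J) :
    IsEgorov (idealSumOver J I) := by
  refine isEgorov_of_forall_setEgorovAt (isIdeal_idealSumOver hJ hI) fun η hη S hS hSI => ?_
  obtain ⟨δ, hδ, hδη⟩ := exists_pos_forall_measure_sdiff_iInter_lt (ι := Option ℕ) volume
    (Icc (0:ℝ) 1) (ENNReal.ofReal_pos.2 hη).ne'
  -- `R n` is where the `n`-th row is not `I n`-small; it is measurable as `I n` is analytic.
  let R : ℕ → Set ℝ := fun n => {t | {k | t ∈ S (n, k)} ∈ I n}ᶜ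
  obtain ⟨M₀, hM₀I, hM₀, hM₀η, hM₀R⟩ := hJE.setEgorovAt hJ (hδ none) R
    (fun n => ((hIa n).nullMeasurableSet_setOf_mem _ fun k => hS (n, k)).compl) hSI
  let B := {n | ¬ IsEgorov (I n)} ∪ {n | (R n ∩ M₀).Nonempty}
  have hrow : ∀ n, ∃ M ⊆ Icc (0:ℝ) 1, MeasurableSet M ∧
      volume (Icc 0 1 \ M) < ENNReal.ofReal (δ (some n)) ∧
      (n ∉ B → {k | (S (n, k) ∩ (M₀ ∩ M)).Nonempty} ∈ I n) := by
    intro n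
    by_cases hn : n ∈ B
    · exact ⟨Icc 0 1, subset_rfl, measurableSet_Icc, by simpa using hδ (some n),
        fun h => (h hn).elim⟩
    simp only [B, mem_union, mem_ofPred_eq, not_or, not_not] at hn
    obtain ⟨M, hMI, hM, hMη, hMS⟩ := (hn.1.setEgorovAt (hI n) (hδ (some n))).restrict (hI n)
      (fun k => hS (n, k)) hM₀ fun t htM => not_not.1 fun htR => hn.2 ⟨t, htR, htM⟩
    exact ⟨M, hMI, hM, hMη, fun _ => hMS⟩
  choose M hMI hM hMη hMS using hrow
  let M' : Option ℕ → Set ℝ := fun o => o.elim M₀ M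
  refine ⟨⋂ o, M' o, (iInter_subset _ none).trans hM₀I, MeasurableSet.iInter fun o => ?_,
    hδη M' fun o => ?_, ?_⟩
  · cases o
    exacts [hM₀, hM _]
  · cases o
    exacts [hM₀η, hMη _]
  · refine hJ.mem_of_subset (fun n hn => ?_) (hJ.union_mem hN hM₀R)
    by_contra hnB
    refine hn ((hI n).mem_of_subset ?_ (hMS n hnB))
    rintro k ⟨t, htS, htM⟩
    exact ⟨t, htS, mem_iInter.1 htM none, mem_iInter.1 htM (some n)⟩

end idealSumOver

/-- For an ideal `J` and analytic ideals `I_n` on `ω`: `∑^J_{n∈ω} I_n` is Egorov iff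
`J` is Egorov and `{n : I_n is not Egorov} ∈ J`. -/
theorem idealSumOver_egorov_iff (J : Set (Set ℕ)) (I : ℕ → Set (Set ℕ))
    (hJ : IsIdeal J) (hI : ∀ n : ℕ, IsIdeal (I n))
    (hIa : ∀ n : ℕ, IsAnalyticIdeal (I n)) :
    IsEgorov (idealSumOver J I) ↔ (IsEgorov J ∧ {n : ℕ | ¬ IsEgorov (I n)} ∈ J) := by
  refine ⟨fun h => ⟨h.of_idealSumOver hI, ?_⟩, fun ⟨hJE, hN⟩ => hJE.idealSumOver hJ hI hIa hN⟩
  have hhalf : {n | ¬ SetEgorovAt (I n) (1 / 2)} ∈ J :=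
    SetEgorovAt.setOf_not_setEgorovAt_mem_of_idealSumOver hJ hI
      (h.setEgorovAt (isIdeal_idealSumOver hJ hI) one_half_pos)
  exact hJ.mem_of_subset
    (fun n hn hn' => hn (isEgorov_of_setEgorovAt (hI n) one_half_pos one_half_lt_one hn')) hhalf
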